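/- Let H be a finite graph with r := e(H) ≥ 1, p ∈ (0,1), η ∈ (0,1], and let Y be the random edge-indicator vector of G(n,p) conditioned on the event L_p(H,η). Then for every W ⊆ E(K_n): E[ Σ_{A ∈ H(H)−W} | E[Y_A | (Y_w)_{w∈W}] − Π_{a∈A} E[Y_a | (Y_w)_{w∈W}] | ] ≤ p^r · ( (r−1)·e(H(H)−W) )^{1/2} · E_H(W)^{1/2}. -/

import Mathlib

/-!
Fix the values revealed on `W` and a copy `A` of `H` disjoint from `W`. The lower tail event
is decreasing, so by Harris' inequality every edge `a ∉ W` is present with conditional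
probability at most `p`. Removing one edge of `A` at a time, and averaging over the edge
removed, telescopes `E[Y_A | Y_W] - ∏ E[Y_a | Y_W]` into the correlations `D_W(B, b)`,
`B ⊆ A`, with weights `p ^ (r - |B|) / (C(r, |B|) |B|)`. Split each weight as
`p ^ r / √(C(r, |B|) |B|)` times `p ^ (-|B|) / √(C(r, |B|) |B|)` and apply Cauchy–Schwarz over
the triples `(A, B, b)`: since there are `C(r, t)` sets `B` of each size `t`, the first
factors contribute `p ^ (2r) (r - 1)` per copy, the second ones the energy density. A last
Cauchy–Schwarz step moves the square root outside the expectation over `Y_W`.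
-/

open scoped BigOperators

attribute [local instance] Classical.propDecidable

noncomputable section

namespace LowerTails

/-- The edge set of the complete graph `K_n`: unordered pairs of distinct elements of `Fin n`. -/
abbrev Edge (n : ℕ) := {e : Sym2 (Fin n) // ¬ e.IsDiag}

/-- A graph on `[n]`, identified with its edge-indicator vector in `{0,1}^{E(K_n)}`. -/
abbrev EGraph (n : ℕ) := Edge n → Bool

/-- The probability of the configuration `G` under the product measure where edge `e`
is present independently with probability `q e`. -/
def wt {n : ℕ} (q : Edge n → ℝ) (G : EGraph n) : ℝ :=
  ∏ e : Edge n, if G e then q e else 1 - q e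

/-- Probability of the event `S` under `G(n, q)`. -/
def pr {n : ℕ} (q : Edge n → ℝ) (S : Set (EGraph n)) : ℝ :=
  ∑ G : EGraph n, if G ∈ S then wt q G else 0

/-- Conditional probability of `S` given `L` under `G(n, q)`. -/
def cpr {n : ℕ} (q : Edge n → ℝ) (L S : Set (EGraph n)) : ℝ :=
  pr q (S ∩ L) / pr q L

/-- Conditional expectation of `f` given the event `L` under `G(n, q)`. -/
def cex {n : ℕ} (q : Edge n → ℝ) (L : Set (EGraph n)) (f : EGraph n → ℝ) : ℝ :=
  (∑ G : EGraph n, if G ∈ L then wt q G * f G else 0) / pr q L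

/-- The simple graph on `Fin n` associated to an edge-indicator vector. -/
def toSG {n : ℕ} (G : EGraph n) : SimpleGraph (Fin n) :=
  SimpleGraph.fromEdgeSet {e : Sym2 (Fin n) | ∃ h : ¬e.IsDiag, G ⟨e, h⟩ = true}

/-- The number of copies of `H` in `G`, i.e. the number of subgraphs of `G` isomorphic to `H`. -/
def countCopies {k n : ℕ} (H : SimpleGraph (Fin k)) (G : SimpleGraph (Fin n)) : ℕ :=
  Set.ncard {K : G.Subgraph | Nonempty (H ≃g K.coe)}

/-- `N_H(G)` for an edge-indicator vector `G`, as a real number. -/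
def NH {k n : ℕ} (H : SimpleGraph (Fin k)) (G : EGraph n) : ℝ :=
  countCopies H (toSG G)

/-- `E[N_H(q)]`, the expected number of copies of `H` in `G(n, q)`. -/
def expNH {k : ℕ} (H : SimpleGraph (Fin k)) {n : ℕ} (q : Edge n → ℝ) : ℝ :=
  ∑ G : EGraph n, wt q G * NH H G

/-- `N_H(K_n)`, the number of copies of `H` in the complete graph `K_n`. -/
def NHKn {k : ℕ} (H : SimpleGraph (Fin k)) (n : ℕ) : ℝ :=
  countCopies H (⊤ : SimpleGraph (Fin n))

/-- The lower tail event `L_p(H, η) = {G : N_H(G) ≤ η E[N_H(p)]}`. -/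
def lowerTail {k : ℕ} (H : SimpleGraph (Fin k)) (n : ℕ) (p η : ℝ) : Set (EGraph n) :=
  {G | NH H G ≤ η * expNH H (fun _ : Edge n => p)}

/-- `h(x) = x log x - x + 1` (with `h(0) = 1` since `Real.log 0 = 0`). -/
def hfun (x : ℝ) : ℝ := x * Real.log x - x + 1

/-- The relative entropy `i_p(t)` of `Ber(t)` with respect to `Ber(p)`. -/
def ip (p t : ℝ) : ℝ := t * Real.log (t / p) + (1 - t) * Real.log ((1 - t) / (1 - p))

/-- The number of edges of `H` as a real number. -/
def eH {k : ℕ} (H : SimpleGraph (Fin k)) : ℝ := H.edgeSet.ncard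

/-- The defining equation of the threshold `η_H`, for a graph with `e` edges. -/
def etaEq (e η : ℝ) : Prop :=
  hfun (η ^ (1 / η)) =
    hfun (η ^ (1 / e)) + η ^ (1 / e) * Real.log (η ^ (1 / e)) *
      (Real.log (η ^ (1 / η)) - Real.log (η ^ (1 / e)))

/-- The 2-density `m_2(H)`. -/
def m2 {k : ℕ} (H : SimpleGraph (Fin k)) : ℝ :=
  sSup {x : ℝ | ∃ F : H.Subgraph, 2 ≤ F.edgeSet.ncard ∧
    x = ((F.edgeSet.ncard : ℝ) - 1) / ((F.verts.ncard : ℝ) - 2)}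

/-- The variational problem `Φ_p(H, η)`. -/
def PhiP {k : ℕ} (H : SimpleGraph (Fin k)) (n : ℕ) (p η : ℝ) : ℝ :=
  sInf {x : ℝ | ∃ q : Edge n → ℝ, (∀ e, q e ∈ Set.Icc (0:ℝ) 1) ∧
    expNH H q ≤ η * expNH H (fun _ : Edge n => p) ∧ x = ∑ e : Edge n, ip p (q e)}

/-- The sparse limit variational problem `Φ(H, η)`. -/
def Phi {k : ℕ} (H : SimpleGraph (Fin k)) (n : ℕ) (η : ℝ) : ℝ :=
  sInf {x : ℝ | ∃ q : Edge n → ℝ, (∀ e, q e ∈ Set.Icc (0:ℝ) 1) ∧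
    expNH H q ≤ η * NHKn H n ∧ x = ∑ e : Edge n, hfun (q e)}

/-- The cut norm of an `n × n` real matrix. -/
def cutNorm {n : ℕ} (M : Matrix (Fin n) (Fin n) ℝ) : ℝ :=
  sSup {x : ℝ | ∃ a b : Fin n → ℝ, (∀ i, a i ∈ Set.Icc (0:ℝ) 1) ∧ (∀ i, b i ∈ Set.Icc (0:ℝ) 1) ∧
    x = |∑ i : Fin n, ∑ j : Fin n, a i * M i j * b j| / (n : ℝ) ^ 2}

/-- The symmetric matrix with entries `q_{ij} - c` off the diagonal, `0` on the diagonal. -/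
def devMat {n : ℕ} (q : Edge n → ℝ) (c : ℝ) : Matrix (Fin n) (Fin n) ℝ :=
  fun i j => if h : i = j then 0 else q ⟨s(i, j), by simp [Sym2.mk_isDiag_iff, h]⟩ - c

/-- The edge-indicator vector of `G` as a real vector. -/
def ind {n : ℕ} (G : EGraph n) : Edge n → ℝ := fun e => if G e then 1 else 0

/-- `Y_A = ∏_{e ∈ A} Y_e`. -/
def YA {n : ℕ} (A : Finset (Edge n)) (G : EGraph n) : ℝ :=
  ∏ e ∈ A, (if G e then (1:ℝ) else 0)

/-- The event that a configuration agrees with `G0` on the set `W`. -/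
def agreeOn {n : ℕ} (W : Finset (Edge n)) (G0 : EGraph n) : Set (EGraph n) :=
  {G | ∀ w ∈ W, G w = G0 w}

/-- The conditional expectation `E[f | (Y_w)_{w ∈ W}]` under the pmf `μ`, evaluated
at the outcome `G0` (i.e. given that `Y` agrees with `G0` on `W`). -/
def condExpW {n : ℕ} (μ : EGraph n → ℝ) (W : Finset (Edge n)) (f : EGraph n → ℝ)
    (G0 : EGraph n) : ℝ :=
  (∑ G : EGraph n, if G ∈ agreeOn W G0 then μ G * f G else 0) /
    (∑ G : EGraph n, if G ∈ agreeOn W G0 then μ G else 0)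

/-- The pmf of `G(n, p)` conditioned on the lower tail event `L_p(H, η)`. -/
def ltPMF {k : ℕ} (H : SimpleGraph (Fin k)) (n : ℕ) (p η : ℝ) : EGraph n → ℝ :=
  fun G => (if G ∈ lowerTail H n p η then wt (fun _ : Edge n => p) G else 0) /
    pr (fun _ : Edge n => p) (lowerTail H n p η)

/-- The hyperedges of the hypergraph `H(H)`: edge sets of copies of `H` in `K_n`. -/
def copySets {k : ℕ} (H : SimpleGraph (Fin k)) (n : ℕ) : Finset (Finset (Edge n)) :=
  Finset.univ.filter (fun A => ∃ f : Fin k ↪ Fin n,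
    ∀ e : Edge n, e ∈ A ↔ ∃ u v : Fin k, H.Adj u v ∧ (e : Sym2 (Fin n)) = s(f u, f v))

/-- The correlation `D_W(B, b)` as a random variable (a function of the outcome `G0`). -/
def DW {n : ℕ} (μ : EGraph n → ℝ) (W : Finset (Edge n)) (B : Finset (Edge n)) (b : Edge n)
    (G0 : EGraph n) : ℝ :=
  condExpW μ W (YA B) G0 - condExpW μ W (YA (B.erase b)) G0 * condExpW μ W (YA {b}) G0

/-- The energy `E_H(W)` of a set `W` with respect to the pmf `μ`. -/
def energy {k n : ℕ} (H : SimpleGraph (Fin k)) (μ : EGraph n → ℝ) (p : ℝ)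
    (W : Finset (Edge n)) : ℝ :=
  ∑ G0 : EGraph n, μ G0 *
    ∑ A ∈ (copySets H n).filter (fun A => Disjoint A W),
      ∑ B ∈ A.powerset.filter (fun B => 2 ≤ B.card),
        ∑ b ∈ B, (DW μ W B b G0) ^ 2 /
          ((Nat.choose H.edgeSet.ncard B.card : ℝ) * (B.card : ℝ) * p ^ (2 * B.card))

end LowerTails

namespace LowerTails

open Finset

def telescopeCoeff (p : ℝ) (r t : ℕ) : ℝ := p ^ (r - t) / (r.choose t * t)

lemma telescopeCoeff_nonneg {p : ℝ} (hp : 0 ≤ p) (r t : ℕ) : 0 ≤ telescopeCoeff p r t := by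
  unfold telescopeCoeff; positivity

lemma succ_mul_telescopeCoeff (p : ℝ) {s t : ℕ} (ht : 1 ≤ t) (hts : t ≤ s + 1) :
    (s + 1 : ℝ) * telescopeCoeff p (s + 1) t
      = p * ((s + 1 - t : ℕ) : ℝ) * telescopeCoeff p s t + if t = s + 1 then 1 else 0 := by
  rcases hts.eq_or_lt with rfl | hlt
  · rw [if_pos rfl, telescopeCoeff, Nat.sub_self, Nat.choose_self]
    field_simp
    push_cast
    ring
  have hchoose : (s.choose t : ℝ) * (s + 1) = (s + 1).choose t * ((s + 1 - t : ℕ) : ℝ) := by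
    exact_mod_cast Nat.choose_mul_succ_eq s t
  have hpow : p ^ (s + 1 - t) = p * p ^ (s - t) := by
    rw [← pow_succ']; congr 1; omega
  have hC : (0 : ℝ) < s.choose t := by exact_mod_cast Nat.choose_pos (by omega)
  have hC' : (0 : ℝ) < (s + 1).choose t := by exact_mod_cast Nat.choose_pos hts
  have ht0 : (0 : ℝ) < t := by exact_mod_cast ht
  rw [if_neg hlt.ne, add_zero, telescopeCoeff, telescopeCoeff, hpow]
  field_simp
  linear_combination p * p ^ (s - t) * hchoose

variable {α : Type*}

section Telescoping

variable [DecidableEq α]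

lemma sum_sum_powerset_erase {M : Type*} [AddCommMonoid M] (A : Finset α)
    (f : Finset α → M) :
    ∑ a ∈ A, ∑ B ∈ (A.erase a).powerset, f B = ∑ B ∈ A.powerset, (A.card - B.card) • f B := by
  have hpow : ∀ a, (A.erase a).powerset = A.powerset.filter (a ∉ ·) := fun a => by
    ext B; simp [subset_erase]
  simp_rw [hpow, sum_filter]
  rw [sum_comm]
  refine sum_congr rfl fun B hB => ?_
  rw [← sum_filter, sum_const, filter_notMem_eq_sdiff, card_sdiff_of_subset (mem_powerset.1 hB)]

lemma sum_erase_telescope (E : Finset α → ℝ) (A : Finset α) :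
    ∑ a ∈ A, ((E A - E (A.erase a) * E {a}) + E {a} * (E (A.erase a) - ∏ x ∈ A.erase a, E {x}))
      = A.card * (E A - ∏ a ∈ A, E {a}) := by
  rw [← nsmul_eq_mul, ← sum_const]
  refine sum_congr rfl fun a ha => ?_
  rw [← mul_prod_erase A (fun x => E {x}) ha]
  ring

lemma telescopeCoeff_recurrence (p : ℝ) (D : Finset α → ℝ) {A : Finset α} {s : ℕ}
    (hs : A.card = s + 1) (hs_pos : 0 < s) :
    D A + p * ∑ a ∈ A, ∑ B ∈ (A.erase a).powerset.filter (2 ≤ ·.card),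
        telescopeCoeff p s B.card * D B
      = (s + 1) * ∑ B ∈ A.powerset.filter (2 ≤ ·.card), telescopeCoeff p (s + 1) B.card * D B := by
  have hswap : ∑ a ∈ A, ∑ B ∈ (A.erase a).powerset.filter (2 ≤ ·.card),
        telescopeCoeff p s B.card * D B
      = ∑ B ∈ A.powerset.filter (2 ≤ ·.card),
        ((s + 1 - B.card : ℕ) : ℝ) * (telescopeCoeff p s B.card * D B) := by
    simp only [sum_filter]
    rw [sum_sum_powerset_erase, hs]
    refine sum_congr rfl fun B _ => ?_
    split_ifs <;> simp [nsmul_eq_mul]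
  have hterm : ∀ B ∈ A.powerset.filter (2 ≤ ·.card),
      (s + 1 : ℝ) * (telescopeCoeff p (s + 1) B.card * D B)
        = p * (((s + 1 - B.card : ℕ) : ℝ) * (telescopeCoeff p s B.card * D B))
          + if B = A then D A else 0 := fun B hB => by
    obtain ⟨hBA, hB2⟩ := mem_filter.1 hB
    have hBA := mem_powerset.1 hBA
    rw [← mul_assoc, succ_mul_telescopeCoeff p (by omega) (hs ▸ card_le_card hBA)]
    by_cases hB : B = A
    · rw [hB, if_pos hs, if_pos rfl]; ring
    · rw [if_neg fun h => hB (eq_of_subset_of_card_le hBA (by omega)), if_neg hB]; ring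
  have hA_mem : A ∈ A.powerset.filter (2 ≤ ·.card) :=
    mem_filter.2 ⟨mem_powerset_self A, by omega⟩
  rw [hswap, eq_comm, mul_sum, sum_congr rfl hterm, sum_add_distrib, sum_ite_eq',
    if_pos hA_mem, ← mul_sum, add_comm]

theorem abs_sub_prod_le_sum_telescopeCoeff (E : Finset α → ℝ) {p : ℝ} {A : Finset α}
    (hA : A.Nonempty) (hE : ∀ a ∈ A, |E {a}| ≤ p) :
    |E A - ∏ a ∈ A, E {a}| ≤ ∑ B ∈ A.powerset.filter (2 ≤ ·.card),
      telescopeCoeff p A.card B.card * ∑ b ∈ B, |E B - E (B.erase b) * E {b}| := by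
  have hp : 0 ≤ p := (abs_nonneg _).trans (hE _ hA.choose_spec)
  set D : Finset α → ℝ := fun B => ∑ b ∈ B, |E B - E (B.erase b) * E {b}|
  induction A using Finset.strongInduction with
  | H A ih =>
  obtain ⟨s, hs⟩ : ∃ s, A.card = s + 1 := ⟨A.card - 1, by have := hA.card_pos; omega⟩
  rcases Nat.eq_zero_or_pos s with rfl | hs_pos
  · obtain ⟨a, rfl⟩ := card_eq_one.1 hs
    rw [prod_singleton, sub_self, abs_zero]
    exact sum_nonneg fun B _ => mul_nonneg (telescopeCoeff_nonneg hp _ _)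
      (sum_nonneg fun _ _ => abs_nonneg _)
  have hIH : ∀ a ∈ A, |E (A.erase a) - ∏ x ∈ A.erase a, E {x}|
      ≤ ∑ B ∈ (A.erase a).powerset.filter (2 ≤ ·.card), telescopeCoeff p s B.card * D B :=
    fun a ha => by
      have herase : (A.erase a).card = s := by rw [card_erase_of_mem ha, hs, Nat.add_sub_cancel]
      rw [← herase]
      exact ih _ (erase_ssubset ha) (card_pos.1 (herase ▸ hs_pos))
        fun x hx => hE x (mem_of_mem_erase hx)
  have hsplit : (s + 1 : ℝ) * |E A - ∏ a ∈ A, E {a}|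
      ≤ D A + p * ∑ a ∈ A, |E (A.erase a) - ∏ x ∈ A.erase a, E {x}| := by
    rw [show (s + 1 : ℝ) = A.card by simp [hs], ← abs_of_nonneg (Nat.cast_nonneg (α := ℝ) _),
      ← abs_mul, ← sum_erase_telescope, mul_sum, ← sum_add_distrib]
    refine (abs_sum_le_sum_abs _ _).trans (sum_le_sum fun a ha => ?_)
    refine (abs_add_le _ _).trans (add_le_add le_rfl ?_)
    rw [abs_mul]
    exact mul_le_mul_of_nonneg_right (hE a ha) (abs_nonneg _)
  refine le_of_mul_le_mul_left (hsplit.trans ?_) (by positivity : (0 : ℝ) < s + 1)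
  rw [hs, ← telescopeCoeff_recurrence p D hs hs_pos]
  gcongr with a ha
  exact hIH a ha

end Telescoping

lemma sum_sum_inv_choose_mul_card {A : Finset α} (hA : A.Nonempty) :
    ∑ B ∈ A.powerset.filter (2 ≤ ·.card), ∑ _b ∈ B, ((A.card.choose B.card : ℝ) * B.card)⁻¹
      = A.card - 1 := by
  have hinner : ∀ B ∈ A.powerset.filter (2 ≤ ·.card),
      ∑ _b ∈ B, ((A.card.choose B.card : ℝ) * B.card)⁻¹ = (A.card.choose B.card : ℝ)⁻¹ :=
    fun B hB => by
      have hB0 : (B.card : ℝ) ≠ 0 := by have := (mem_filter.1 hB).2; positivity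
      rw [sum_const, nsmul_eq_mul, mul_inv, mul_left_comm, mul_inv_cancel₀ hB0, mul_one]
  rw [sum_congr rfl hinner, sum_filter,
    sum_powerset_apply_card (fun m => if 2 ≤ m then (A.card.choose m : ℝ)⁻¹ else 0)]
  have hterm : ∀ m ∈ range (A.card + 1),
      A.card.choose m • (if 2 ≤ m then (A.card.choose m : ℝ)⁻¹ else 0)
        = if 2 ≤ m then 1 else 0 := fun m hm => by
    have : (A.card.choose m : ℝ) ≠ 0 := by
      exact_mod_cast (Nat.choose_pos (Nat.lt_succ_iff.1 (mem_range.1 hm))).ne'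
    split_ifs <;> simp [this]
  have hcount : ((range (A.card + 1)).filter (2 ≤ ·)).card = A.card - 1 := by
    rw [range_eq_Ico, Ico_filter_le, Nat.card_Ico]; omega
  rw [sum_congr rfl hterm, sum_boole, hcount, Nat.cast_sub hA.card_pos, Nat.cast_one]

lemma sum_sum_sum_mul_le_sqrt_mul_sqrt {ι κ ν : Type*} (s : Finset ι) (t : ι → Finset κ)
    (u : ι → κ → Finset ν) (f g : ι → κ → ν → ℝ) :
    ∑ i ∈ s, ∑ j ∈ t i, ∑ k ∈ u i j, f i j k * g i j k
      ≤ √(∑ i ∈ s, ∑ j ∈ t i, ∑ k ∈ u i j, f i j k ^ 2)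
        * √(∑ i ∈ s, ∑ j ∈ t i, ∑ k ∈ u i j, g i j k ^ 2) := by
  simp only [sum_sigma']
  exact Real.sum_mul_le_sqrt_mul_sqrt _ _ _

lemma sum_telescopeCoeff_mul_abs_le {p : ℝ} (hp : 0 < p) {r : ℕ} (hr : 1 ≤ r)
    (F : Finset (Finset α)) (hF : ∀ A ∈ F, A.card = r) (d : Finset α → α → ℝ) :
    ∑ A ∈ F, ∑ B ∈ A.powerset.filter (2 ≤ ·.card), ∑ b ∈ B, telescopeCoeff p r B.card * |d B b|
      ≤ p ^ r * √((r - 1) * F.card) * √(∑ A ∈ F, ∑ B ∈ A.powerset.filter (2 ≤ ·.card),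
        ∑ b ∈ B, d B b ^ 2 / ((r.choose B.card : ℝ) * B.card * p ^ (2 * B.card))) := by
  set c : ℕ → ℝ := fun t => (r.choose t : ℝ) * t
  have hc : ∀ A ∈ F, ∀ B ∈ A.powerset.filter (2 ≤ ·.card), 0 < c B.card := fun A hA B hB => by
    obtain ⟨hBA, hB2⟩ := mem_filter.1 hB
    have hBr : B.card ≤ r := hF A hA ▸ card_le_card (mem_powerset.1 hBA)
    have : (0 : ℝ) < r.choose B.card := by exact_mod_cast Nat.choose_pos hBr
    have : (0 : ℝ) < B.card := by exact_mod_cast (show 0 < B.card by omega)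
    positivity
  have hfactor : ∀ A ∈ F, ∀ B ∈ A.powerset.filter (2 ≤ ·.card), ∀ b,
      telescopeCoeff p r B.card * |d B b|
        = p ^ r / √(c B.card) * (|d B b| / (p ^ B.card * √(c B.card))) := fun A hA B hB b => by
    have hBr : B.card ≤ r := hF A hA ▸ card_le_card (mem_powerset.1 (mem_filter.1 hB).1)
    have hpow : p ^ r = p ^ (r - B.card) * p ^ B.card := by rw [← pow_add, Nat.sub_add_cancel hBr]
    calc telescopeCoeff p r B.card * |d B b| = p ^ (r - B.card) / c B.card * |d B b| := rfl
      _ = p ^ r * |d B b| / (p ^ B.card * (√(c B.card) * √(c B.card))) := by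
        rw [Real.mul_self_sqrt (hc A hA B hB).le, hpow]
        field_simp
      _ = _ := by ring
  have hsq_left : ∀ A ∈ F, ∑ B ∈ A.powerset.filter (2 ≤ ·.card), ∑ b ∈ B,
      (p ^ r / √(c B.card)) ^ 2 = p ^ (2 * r) * (r - 1) := fun A hA => by
    have hA_ne : A.Nonempty := card_pos.1 (hF A hA ▸ hr)
    have hcount := sum_sum_inv_choose_mul_card hA_ne
    rw [hF A hA] at hcount
    rw [← hcount, mul_sum]
    refine sum_congr rfl fun B hB => ?_
    rw [mul_sum]
    refine sum_congr rfl fun b _ => ?_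
    rw [div_pow, Real.sq_sqrt (hc A hA B hB).le, ← pow_mul, mul_comm r 2, div_eq_mul_inv]
  have hsq_right : ∀ A ∈ F, ∀ B ∈ A.powerset.filter (2 ≤ ·.card), ∀ b,
      (|d B b| / (p ^ B.card * √(c B.card))) ^ 2
        = d B b ^ 2 / ((r.choose B.card : ℝ) * B.card * p ^ (2 * B.card)) :=
    fun A hA B hB b => by
      rw [div_pow, sq_abs, mul_pow, Real.sq_sqrt (hc A hA B hB).le, ← pow_mul, mul_comm _ 2,
        mul_comm (p ^ _)]
  calc _ = ∑ A ∈ F, ∑ B ∈ A.powerset.filter (2 ≤ ·.card), ∑ b ∈ B,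
          p ^ r / √(c B.card) * (|d B b| / (p ^ B.card * √(c B.card))) :=
        sum_congr rfl fun A hA => sum_congr rfl fun B hB => sum_congr rfl fun b _ =>
          hfactor A hA B hB b
    _ ≤ _ := sum_sum_sum_mul_le_sqrt_mul_sqrt _ _ _ _ _
    _ = _ := by
      rw [sum_congr rfl hsq_left, sum_congr rfl fun A hA => sum_congr rfl fun B hB =>
        sum_congr rfl fun b _ => hsq_right A hA B hB b, sum_const, nsmul_eq_mul,
        mul_left_comm, Real.sqrt_mul (by positivity), mul_comm 2 r, pow_mul,
        Real.sqrt_sq (by positivity), mul_comm (F.card : ℝ)]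

lemma sum_mul_sqrt_le_sqrt_sum_mul {ι : Type*} (s : Finset ι) {w f : ι → ℝ}
    (hw : ∀ i, 0 ≤ w i) (hf : ∀ i, 0 ≤ f i) (hw_sum : ∑ i ∈ s, w i ≤ 1) :
    ∑ i ∈ s, w i * √(f i) ≤ √(∑ i ∈ s, w i * f i) := by
  have hsplit : ∀ i, w i * √(f i) = √(w i) * √(w i * f i) := fun i => by
    rw [Real.sqrt_mul (hw i), ← mul_assoc, Real.mul_self_sqrt (hw i)]
  simp only [hsplit]
  calc ∑ i ∈ s, √(w i) * √(w i * f i) ≤ √(∑ i ∈ s, w i) * √(∑ i ∈ s, w i * f i) :=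
        Real.sum_sqrt_mul_sqrt_le s hw fun i => mul_nonneg (hw i) (hf i)
    _ ≤ √(∑ i ∈ s, w i * f i) :=
        mul_le_of_le_one_left (Real.sqrt_nonneg _) (Real.sqrt_le_one.2 hw_sum)

lemma countCopies_mono {k n : ℕ} (H : SimpleGraph (Fin k)) {G₁ G₂ : SimpleGraph (Fin n)}
    (h : G₁ ≤ G₂) : countCopies H G₁ ≤ countCopies H G₂ := by
  refine Set.ncard_le_ncard_of_injOn
    (fun K => ⟨K.verts, K.Adj, fun ha => h (K.adj_sub ha), K.edge_vert, K.symm⟩)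
    (fun K ⟨e⟩ => ⟨e⟩) (fun K _ K' _ hK => ?_)
  simp only [SimpleGraph.Subgraph.mk.injEq] at hK
  exact SimpleGraph.Subgraph.ext hK.1 hK.2

lemma NH_mono {k n : ℕ} (H : SimpleGraph (Fin k)) {G₁ G₂ : EGraph n}
    (h : ∀ e, G₁ e = true → G₂ e = true) : NH H G₁ ≤ NH H G₂ :=
  Nat.cast_le.mpr <| countCopies_mono H <|
    SimpleGraph.fromEdgeSet_mono fun _ ⟨hd, he⟩ => ⟨hd, h _ he⟩

lemma update_false_mem_lowerTail {k n : ℕ} {H : SimpleGraph (Fin k)} {p η : ℝ}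
    {G : EGraph n} (hG : G ∈ lowerTail H n p η) (a : Edge n) :
    Function.update G a false ∈ lowerTail H n p η := by
  refine (NH_mono H fun e he => ?_).trans hG
  by_cases hea : e = a
  · simp [hea] at he
  · rwa [Function.update_of_ne hea] at he

lemma YA_nonneg {n : ℕ} (B : Finset (Edge n)) (G : EGraph n) : 0 ≤ YA B G :=
  prod_nonneg fun _ _ => by split <;> norm_num

lemma wt_nonneg {n : ℕ} {q : Edge n → ℝ} (hq : ∀ e, q e ∈ Set.Icc (0:ℝ) 1) (G : EGraph n) :
    0 ≤ wt q G :=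
  prod_nonneg fun e _ => by
    obtain ⟨h0, h1⟩ := hq e
    split <;> linarith

lemma wt_update_false {n : ℕ} (q : Edge n → ℝ) {G : EGraph n} {a : Edge n}
    (ha : G a = true) : (1 - q a) * wt q G = q a * wt q (Function.update G a false) := by
  have hrest : ∏ e ∈ univ.erase a, (if Function.update G a false e then q e else 1 - q e)
      = ∏ e ∈ univ.erase a, (if G e then q e else 1 - q e) :=
    prod_congr rfl fun e he => by rw [Function.update_of_ne (ne_of_mem_erase he)]
  simp only [wt, ← mul_prod_erase univ _ (mem_univ a), hrest, ha, Function.update_self,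
    if_true, Bool.false_eq_true, if_false]
  ring

section ConditionedMeasure

variable {k n : ℕ} (H : SimpleGraph (Fin k)) {p : ℝ} (η : ℝ)

lemma ltPMF_nonneg (hp : p ∈ Set.Icc (0:ℝ) 1) (G : EGraph n) : 0 ≤ ltPMF H n p η G :=
  div_nonneg (by split <;> simp [wt_nonneg fun _ => hp])
    (sum_nonneg fun G _ => by split <;> simp [wt_nonneg fun _ => hp])

lemma sum_ltPMF_le_one : ∑ G : EGraph n, ltPMF H n p η G ≤ 1 := by
  simp only [ltPMF, ← sum_div]
  exact div_self_le_one _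

lemma ltPMF_update_false (hp : p ∈ Set.Icc (0:ℝ) 1) {G : EGraph n} {a : Edge n}
    (ha : G a = true) :
    (1 - p) * ltPMF H n p η G ≤ p * ltPMF H n p η (Function.update G a false) := by
  by_cases hG : G ∈ lowerTail H n p η
  · simp only [ltPMF, if_pos hG, if_pos (update_false_mem_lowerTail hG a), mul_div_assoc']
    rw [wt_update_false (fun _ => p) ha]
  · rw [ltPMF, if_neg hG, zero_div, mul_zero]
    exact mul_nonneg hp.1 (ltPMF_nonneg H η hp _)

end ConditionedMeasure

section ConditionalExpectation

variable {n : ℕ} {μ : EGraph n → ℝ} (W : Finset (Edge n))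

lemma condExpW_nonneg (hμ : ∀ G, 0 ≤ μ G) {f : EGraph n → ℝ} (hf : ∀ G, 0 ≤ f G)
    (G0 : EGraph n) : 0 ≤ condExpW μ W f G0 :=
  div_nonneg (sum_nonneg fun G _ => by split <;> simp [mul_nonneg (hμ G) (hf G)])
    (sum_nonneg fun G _ => by split <;> simp [hμ G])

-- A one-edge form of Harris' inequality: pair each `G` with `G` with the edge `a` flipped.
lemma condExpW_YA_singleton_le (hμ : ∀ G, 0 ≤ μ G) {p : ℝ} (hp : 0 ≤ p) {a : Edge n}
    (ha : a ∉ W)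
    (hμa : ∀ G, G a = true → (1 - p) * μ G ≤ p * μ (Function.update G a false))
    (G0 : EGraph n) : condExpW μ W (YA {a}) G0 ≤ p := by
  have flip_involutive : Function.Involutive fun G : EGraph n => Function.update G a (!G a) :=
    fun G => by ext e; by_cases he : e = a <;> simp [he]
  let flip : Equiv.Perm (EGraph n) := flip_involutive.toPerm _
  have flip_apply : ∀ G, flip G = Function.update G a (!G a) := fun _ => rfl
  have flip_mem_agreeOn : ∀ G, flip G ∈ agreeOn W G0 ↔ G ∈ agreeOn W G0 := fun G =>
    forall₂_congr fun w hw => by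
      rw [flip_apply, Function.update_of_ne (show w ≠ a from fun h => ha (h ▸ hw))]
  set present := ∑ G, if G ∈ agreeOn W G0 ∧ G a = true then μ G else 0
  set absent := ∑ G, if G ∈ agreeOn W G0 ∧ G a = false then μ G else 0
  have hnum : (∑ G, if G ∈ agreeOn W G0 then μ G * YA {a} G else 0) = present :=
    sum_congr rfl fun G _ => by by_cases h : G a <;> simp [YA, h]
  have hden : (∑ G, if G ∈ agreeOn W G0 then μ G else 0) = present + absent := by
    rw [← sum_add_distrib]
    exact sum_congr rfl fun G _ => by by_cases h : G a <;> simp [h]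
  have hswap : (∑ G, if G ∈ agreeOn W G0 ∧ G a = true then μ (flip G) else 0) = absent := by
    rw [← Equiv.sum_comp flip]
    refine sum_congr rfl fun G _ => ?_
    rw [flip_mem_agreeOn, show flip (flip G) = G from flip_involutive G, flip_apply,
      Function.update_self]
    cases G a <;> simp
  have hodds : (1 - p) * present ≤ p * absent := by
    rw [← hswap, mul_sum, mul_sum]
    refine sum_le_sum fun G _ => ?_
    split_ifs with hG
    · simpa [flip_apply, hG.2] using hμa G hG.2
    · simp
  have hden_nonneg : 0 ≤ present + absent :=
    hden ▸ sum_nonneg fun G _ => by split <;> simp [hμ G]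
  rw [condExpW, hnum, hden]
  exact div_le_of_le_mul₀ hden_nonneg hp (by linarith)

end ConditionalExpectation

lemma card_of_mem_copySets {k n : ℕ} {H : SimpleGraph (Fin k)} {A : Finset (Edge n)}
    (hA : A ∈ copySets H n) : A.card = H.edgeSet.ncard := by
  obtain ⟨f, hf⟩ := (mem_filter.1 hA).2
  have hmap : A.map (Function.Embedding.subtype _) = H.edgeFinset.map f.sym2Map := by
    ext e
    simp only [mem_map, Function.Embedding.coe_subtype, SimpleGraph.mem_edgeFinset]
    constructor
    · rintro ⟨e', he', rfl⟩
      obtain ⟨u, v, huv, he⟩ := (hf e').1 he'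
      exact ⟨s(u, v), huv, he.symm⟩
    · rintro ⟨e', he', rfl⟩
      induction e' using Sym2.ind with
      | _ u v =>
        have hdiag : ¬ s(f u, f v).IsDiag := by
          simpa using fun h => (SimpleGraph.Adj.ne he') (f.injective h)
        exact ⟨⟨_, hdiag⟩, (hf _).2 ⟨u, v, he', rfl⟩, rfl⟩
  rw [← card_map, hmap, card_map, Set.ncard_eq_toFinset_card']
  rfl

lemma abs_condExpW_YA_sub_prod_le {k n : ℕ} (H : SimpleGraph (Fin k)) {p : ℝ}
    (hp : p ∈ Set.Icc (0:ℝ) 1) (η : ℝ) {W A : Finset (Edge n)} (hA : A.Nonempty)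
    (hAW : Disjoint A W) (G0 : EGraph n) :
    |condExpW (ltPMF H n p η) W (YA A) G0 - ∏ a ∈ A, condExpW (ltPMF H n p η) W (YA {a}) G0|
      ≤ ∑ B ∈ A.powerset.filter (2 ≤ ·.card), ∑ b ∈ B,
        telescopeCoeff p A.card B.card * |DW (ltPMF H n p η) W B b G0| := by
  have hμ : ∀ G : EGraph n, 0 ≤ ltPMF H n p η G := ltPMF_nonneg H η hp
  have hE : ∀ a ∈ A, |condExpW (ltPMF H n p η) W (YA {a}) G0| ≤ p := fun a ha => by
    rw [abs_of_nonneg (condExpW_nonneg W hμ (YA_nonneg _) G0)]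
    exact condExpW_YA_singleton_le W hμ hp.1 (disjoint_left.1 hAW ha)
      (fun _ => ltPMF_update_false H η hp) G0
  refine (abs_sub_prod_le_sum_telescopeCoeff (fun B => condExpW _ W (YA B) G0) hA hE).trans_eq ?_
  simp only [mul_sum]
  rfl

theorem statement3_general {k : ℕ} (H : SimpleGraph (Fin k)) (hH : H.edgeSet.Nonempty)
    (n : ℕ) (p η : ℝ) (hp : p ∈ Set.Ioo (0:ℝ) 1)
    (W : Finset (Edge n)) :
    (∑ G0 : EGraph n, ltPMF H n p η G0 *
      ∑ A ∈ (copySets H n).filter (fun A => Disjoint A W),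
        |condExpW (ltPMF H n p η) W (YA A) G0 -
          ∏ a ∈ A, condExpW (ltPMF H n p η) W (YA {a}) G0|)
      ≤ p ^ H.edgeSet.ncard *
        Real.sqrt (((H.edgeSet.ncard : ℝ) - 1) *
          (((copySets H n).filter (fun A => Disjoint A W)).card : ℝ)) *
        Real.sqrt (energy H (ltPMF H n p η) p W) := by
  set μ := ltPMF H n p η
  set r := H.edgeSet.ncard
  set F := (copySets H n).filter (fun A => Disjoint A W)
  have hp0 : 0 < p := hp.1
  have hr : 1 ≤ r := (Set.ncard_pos (Set.toFinite _)).2 hH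
  have hμ : ∀ G, 0 ≤ μ G := ltPMF_nonneg H η (Set.Ioo_subset_Icc_self hp)
  have hcard : ∀ A ∈ F, A.card = r := fun A hA => card_of_mem_copySets (mem_filter.1 hA).1
  set density : EGraph n → ℝ := fun G0 => ∑ A ∈ F, ∑ B ∈ A.powerset.filter (2 ≤ ·.card),
    ∑ b ∈ B, DW μ W B b G0 ^ 2 / ((r.choose B.card : ℝ) * B.card * p ^ (2 * B.card))
  have hdensity : ∀ G0, 0 ≤ density G0 := fun G0 =>
    sum_nonneg fun _ _ => sum_nonneg fun _ _ => sum_nonneg fun _ _ => by positivity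
  have hcopies : ∀ G0, ∑ A ∈ F, |condExpW μ W (YA A) G0 - ∏ a ∈ A, condExpW μ W (YA {a}) G0|
      ≤ p ^ r * √((r - 1) * F.card) * √(density G0) := fun G0 => by
    refine (sum_le_sum fun A hA => ?_).trans (sum_telescopeCoeff_mul_abs_le hp0 hr F hcard _)
    rw [← hcard A hA]
    exact abs_condExpW_YA_sub_prod_le H (Set.Ioo_subset_Icc_self hp) η
      (card_pos.1 (by have := hcard A hA; omega)) (mem_filter.1 hA).2 G0
  calc _ ≤ ∑ G0, μ G0 * (p ^ r * √((r - 1) * F.card) * √(density G0)) :=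
        sum_le_sum fun G0 _ => mul_le_mul_of_nonneg_left (hcopies G0) (hμ G0)
    _ = p ^ r * √((r - 1) * F.card) * ∑ G0, μ G0 * √(density G0) := by
        rw [mul_sum]; exact sum_congr rfl fun _ _ => by ring
    _ ≤ p ^ r * √((r - 1) * F.card) * √(energy H μ p W) := by
        gcongr
        exact sum_mul_sqrt_le_sqrt_sum_mul _ hμ hdensity (sum_ltPMF_le_one H η)

/-- Cauchy–Schwarz correlation bound. -/
theorem statement3 {k : ℕ} (H : SimpleGraph (Fin k)) (hH : H.edgeSet.Nonempty)
    (n : ℕ) (p η : ℝ) (hp : p ∈ Set.Ioo (0:ℝ) 1) (hη : η ∈ Set.Ioc (0:ℝ) 1)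
    (W : Finset (Edge n)) :
    (∑ G0 : EGraph n, ltPMF H n p η G0 *
      ∑ A ∈ (copySets H n).filter (fun A => Disjoint A W),
        |condExpW (ltPMF H n p η) W (YA A) G0 -
          ∏ a ∈ A, condExpW (ltPMF H n p η) W (YA {a}) G0|)
      ≤ p ^ H.edgeSet.ncard *
        Real.sqrt (((H.edgeSet.ncard : ℝ) - 1) *
          (((copySets H n).filter (fun A => Disjoint A W)).card : ℝ)) *
        Real.sqrt (energy H (ltPMF H n p η) p W) :=
  statement3_general H hH n p η hp W

end LowerTails
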